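/- Let k ≥ 1, let a : ℕ → ℂ be a k-periodic sequence, let x : ℕ → ℂ satisfy x_{n+2} = a_n x_{n+1} + x_n for all n ≥ 0, and let C_k be the monodromy matrix. Suppose there is an invertible 2×2 complex matrix J such that C_k = J · [[1, 1], [0, 1]] · J⁻¹ (the Jordan form for a double eigenvalue 1). Then for every n ≥ 0: x_{nk} = (J_{2,1}(J⁻¹)_{1,1} + (n J_{2,1} + J_{2,2})(J⁻¹)_{2,1}) x_1 + (J_{2,1}(J⁻¹)_{1,2} + (n J_{2,1} + J_{2,2})(J⁻¹)_{2,2}) x_0, and x_{nk+1} = (J_{1,1}(J⁻¹)_{1,1} + (n J_{1,1} + J_{1,2})(J⁻¹)_{2,1}) x_1 + (J_{1,1}(J⁻¹)_{1,2} + (n J_{1,1} + J_{1,2})(J⁻¹)_{2,2}) x_0. -/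

import Mathlib

/-!
Transfer matrices turn the recurrence into `(x (m + 1), x m) = C_m (x 1, x 0)`, and periodicity of
`a` gives `C_{nk} = C_k ^ n`. Conjugation commutes with powers and `!![1, 1; 0, 1] ^ n = !![1, n; 0, 1]`,
so `C_{nk} = J !![1, n; 0, 1] J⁻¹`; the two formulas are the entries of this matrix applied to
`(x 1, x 0)`.
-/

/-- The `i`-th Fibonacci matrix. -/
def fibMat (a : ℕ → ℂ) (i : ℕ) : Matrix (Fin 2) (Fin 2) ℂ :=
  !![a i, 1; 1, 0]

/-- The product `C n = A_{n-1} ⋯ A_1 A_0` of Fibonacci matrices. -/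
noncomputable def fibProd (a : ℕ → ℂ) : ℕ → Matrix (Fin 2) (Fin 2) ℂ
  | 0 => 1
  | n + 1 => fibMat a n * fibProd a n

open Matrix

theorem Matrix.conj_pow_of_isUnit_det {ι R : Type*} [Fintype ι] [DecidableEq ι] [CommRing R]
    (J N : Matrix ι ι R) (hJ : IsUnit J.det) (n : ℕ) :
    (J * N * J⁻¹) ^ n = J * N ^ n * J⁻¹ :=
  Units.conj_pow (nonsingInvUnit J hJ) N n

theorem Matrix.unipotent_fin_two_pow {R : Type*} [Semiring R] (n : ℕ) :
    (!![1, 1; 0, 1] : Matrix (Fin 2) (Fin 2) R) ^ n = !![1, (n : R); 0, 1] := by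
  induction n with
  | zero => simp [one_fin_two]
  | succ n ih =>
    rw [pow_succ, ih]
    ext i j
    fin_cases i <;> fin_cases j <;> simp [add_comm]

theorem fibProd_add (a : ℕ → ℂ) (m j : ℕ) :
    fibProd a (m + j) = fibProd (fun i => a (m + i)) j * fibProd a m := by
  induction j with
  | zero => simp [fibProd]
  | succ j ih => rw [← add_assoc, fibProd, fibProd, ih, fibMat, fibMat, mul_assoc]

theorem fibProd_nat_mul_of_periodic {a : ℕ → ℂ} {k : ℕ} (ha : Function.Periodic a k) (n : ℕ) :
    fibProd a (n * k) = fibProd a k ^ n := by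
  induction n with
  | zero => simp [fibProd]
  | succ n ih =>
    have shift : (fun i => a (n * k + i)) = a := funext fun i => by
      rw [add_comm]
      exact_mod_cast ha.nat_mul n i
    rw [add_one_mul, fibProd_add, shift, ih, pow_succ']

theorem fibProd_mulVec {a x : ℕ → ℂ} (hx : ∀ n, x (n + 2) = a n * x (n + 1) + x n) (m : ℕ) :
    fibProd a m *ᵥ ![x 1, x 0] = ![x (m + 1), x m] := by
  induction m with
  | zero => simp [fibProd]
  | succ m ih =>
    rw [fibProd, ← mulVec_mulVec, ih, hx]
    ext i
    fin_cases i <;> simp [fibMat, mul_comm]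

theorem binet_formula_jordan_one_general (k : ℕ) (a : ℕ → ℂ)
    (ha : ∀ n, a (n + k) = a n) (x : ℕ → ℂ)
    (hx : ∀ n, x (n + 2) = a n * x (n + 1) + x n)
    (J : Matrix (Fin 2) (Fin 2) ℂ) (hJ : IsUnit J.det)
    (hC : fibProd a k = J * !![1, 1; 0, 1] * J⁻¹) (n : ℕ) :
    x (n * k) =
      (J 1 0 * J⁻¹ 0 0 + ((n : ℂ) * J 1 0 + J 1 1) * J⁻¹ 1 0) * x 1 +
      (J 1 0 * J⁻¹ 0 1 + ((n : ℂ) * J 1 0 + J 1 1) * J⁻¹ 1 1) * x 0 ∧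
    x (n * k + 1) =
      (J 0 0 * J⁻¹ 0 0 + ((n : ℂ) * J 0 0 + J 0 1) * J⁻¹ 1 0) * x 1 +
      (J 0 0 * J⁻¹ 0 1 + ((n : ℂ) * J 0 0 + J 0 1) * J⁻¹ 1 1) * x 0 := by
  have hCn : fibProd a (n * k) = J * !![1, (n : ℂ); 0, 1] * J⁻¹ := by
    rw [fibProd_nat_mul_of_periodic ha, hC, conj_pow_of_isUnit_det J _ hJ, unipotent_fin_two_pow]
  have hv := fibProd_mulVec hx (n * k)
  rw [hCn] at hv
  have hsucc := congrFun hv 0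
  have hcur := congrFun hv 1
  simp only [mulVec, dotProduct, mul_apply, of_apply, cons_val', cons_val_fin_one, Fin.sum_univ_two,
    cons_val_zero, cons_val_one, mul_one, mul_zero, add_zero] at hsucc hcur
  exact ⟨by rw [← hcur]; ring, by rw [← hsucc]; ring⟩

theorem binet_formula_jordan_one (k : ℕ) (hk : 1 ≤ k) (a : ℕ → ℂ)
    (ha : ∀ n, a (n + k) = a n) (x : ℕ → ℂ)
    (hx : ∀ n, x (n + 2) = a n * x (n + 1) + x n)
    (J : Matrix (Fin 2) (Fin 2) ℂ) (hJ : IsUnit J.det)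
    (hC : fibProd a k = J * !![1, 1; 0, 1] * J⁻¹) (n : ℕ) :
    x (n * k) =
      (J 1 0 * J⁻¹ 0 0 + ((n : ℂ) * J 1 0 + J 1 1) * J⁻¹ 1 0) * x 1 +
      (J 1 0 * J⁻¹ 0 1 + ((n : ℂ) * J 1 0 + J 1 1) * J⁻¹ 1 1) * x 0 ∧
    x (n * k + 1) =
      (J 0 0 * J⁻¹ 0 0 + ((n : ℂ) * J 0 0 + J 0 1) * J⁻¹ 1 0) * x 1 +
      (J 0 0 * J⁻¹ 0 1 + ((n : ℂ) * J 0 0 + J 0 1) * J⁻¹ 1 1) * x 0 :=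
  binet_formula_jordan_one_general k a ha x hx J hJ hC n
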